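/- Let ℓ ≥ 3 be an integer. For every ε > 0 and every C > 0 there exists n_0 such that for every n ≥ n_0 there exists a simple graph G on n vertices containing no K_(2ℓ+1), with independence number α(G) ≤ n·2^(−C·(log n)^(ℓ/(ℓ+1))), and satisfying k_3(G) ≥ ((ℓ choose 3)/ℓ³ − ε)·n³. -/

import Mathlib

open Finset

/-- `α(G) ≤ b`: every independent set of `G` has size at most `b`. -/
def indepLE {n : ℕ} (G : SimpleGraph (Fin n)) (b : ℝ) : Prop :=
  ∀ S : Finset (Fin n), (∀ u ∈ S, ∀ v ∈ S, u ≠ v → ¬ G.Adj u v) → (S.card : ℝ) ≤ b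

/-- `(G, φ)` contains a monochromatic `K_k`. -/
def HasMonoClique {n r : ℕ} (G : SimpleGraph (Fin n)) (φ : G.edgeSet → Fin r) (k : ℕ) : Prop :=
  ∃ (S : Finset (Fin n)) (c : Fin r), S.card = k ∧
    ∀ u ∈ S, ∀ v ∈ S, u ≠ v → ∃ h : G.Adj u v, φ ⟨s(u, v), h⟩ = c

/-- Number of `r`-edge-colorings of `G` with no monochromatic `K_k`. -/
noncomputable def numColorings {n : ℕ} (G : SimpleGraph (Fin n)) (r k : ℕ) : ℕ :=
  Nat.card {φ : G.edgeSet → Fin r // ¬ HasMonoClique G φ k}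

/-- `k_s(G)`: the number of copies of `K_s` in `G`. -/
noncomputable def cliqueCount {n : ℕ} (G : SimpleGraph (Fin n)) (s : ℕ) : ℕ :=
  Nat.card {S : Finset (Fin n) // G.IsNClique s S}

/-- `b_k` from Ramsey–Turán theory. -/
noncomputable def bconst (k : ℕ) : ℝ :=
  if Odd k then ((k : ℝ) - 3) / (2 * ((k : ℝ) - 1))
  else (3 * (k : ℝ) - 10) / (2 * (3 * (k : ℝ) - 4))

/-- `a_ℓ` in the even case: maximum over `x ∈ [0,1]`. -/
noncomputable def aEven (ℓ : ℕ) : ℝ :=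
  sSup ((fun x : ℝ =>
    ((ℓ - 2).choose 3 : ℝ) * ((1 - x) / ((ℓ : ℝ) - 2)) ^ 3 +
    x * ((ℓ - 2).choose 2 : ℝ) * ((1 - x) / ((ℓ : ℝ) - 2)) ^ 2 +
    (1 / 2) * (x / 2) ^ 2 * (1 - x)) '' Set.Icc (0 : ℝ) 1)

/-!
Colour the pairs of `n` vertices uniformly at random with `k ≈ 2 n^{2/3}` colours and keep the
pairs of colour `0`. Since `k³ ≥ 4 n²`, the expected number of triangles is at most `n / 2`, and for
`t ≈ 2 k (log n + 2)` the expected number of independent `t`-sets is below `1/4`; deleting a vertex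
of every triangle leaves a triangle-free graph `H` on at least `n / 2` vertices with no independent
`t`-set. Now take `ℓ` copies of `H`, join any two vertices in different copies (the lexicographic
product `K_ℓ[H]`), and keep `n` of its vertices. A `(2ℓ+1)`-clique would have three vertices in
one copy, i.e. a triangle of `H`; an independent set lies in one copy; and the triangles with
vertices in three different copies already number `(ℓ choose 3) ⌊n/ℓ⌋³`. Finally
`t = O(n^{2/3} log n) ≤ n^{3/4} ≤ n 2^{-C (log n)^{ℓ/(ℓ+1)}}` for large `n`.
-/

namespace Finset

variable {α β : Type*}

theorem card_filter_forall_mem_eq [Fintype α] [DecidableEq α] [Fintype β] [DecidableEq β]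
    (s : Finset α) (A : Finset β) :
    #{f : α → β | ∀ x ∈ s, f x ∈ A} = #A ^ #s * Fintype.card β ^ (Fintype.card α - #s) := by
  have h : ({f : α → β | ∀ x ∈ s, f x ∈ A} : Finset _) =
      Fintype.piFinset fun x => if x ∈ s then A else univ := by
    ext f
    simp only [mem_filter, mem_univ, true_and, Fintype.mem_piFinset]
    exact ⟨fun h x => by split_ifs with hx <;> simp [h, hx], fun h x hx => by simpa [hx] using h x⟩
  rw [h, Fintype.card_piFinset]
  simp only [apply_ite card]
  rw [prod_ite, prod_const, prod_const, filter_mem_eq_inter, univ_inter, ← card_compl]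
  congr 3
  ext; simp

lemma forall_mem_image_offDiag_iff [DecidableEq α] {s : Finset α} {p : Sym2 α → Prop} :
    (∀ e ∈ s.offDiag.image Sym2.mk.uncurry, p e) ↔ ∀ u ∈ s, ∀ v ∈ s, u ≠ v → p s(u, v) := by
  refine ⟨fun h u hu v hv huv => h _ (mem_image_of_mem _ (mem_offDiag.mpr ⟨hu, hv, huv⟩)), ?_⟩
  rintro h _ he
  obtain ⟨⟨u, v⟩, huv, rfl⟩ := mem_image.mp he
  obtain ⟨hu, hv, hne⟩ := mem_offDiag.mp huv
  exact h u hu v hv hne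

lemma injOn_snd_of_fst_eq {s : Finset (α × β)} {a : α} (hs : ∀ p ∈ s, p.1 = a) :
    Set.InjOn Prod.snd (s : Set (α × β)) := fun p hp q hq h =>
  Prod.ext ((hs p hp).trans (hs q hq).symm) h

section GraphOn

variable [DecidableEq α] [DecidableEq β]

def graphOn (s : Finset α) (g : s → β) : Finset (α × β) :=
  s.attach.image fun a => (a.1, g a)

lemma mem_graphOn {s : Finset α} {g : s → β} {p : α × β} :
    p ∈ graphOn s g ↔ ∃ h : p.1 ∈ s, g ⟨p.1, h⟩ = p.2 := by
  constructor
  · rintro hp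
    obtain ⟨a, -, rfl⟩ := mem_image.mp hp
    exact ⟨a.2, rfl⟩
  · rintro ⟨h, hg⟩
    exact mem_image.mpr ⟨⟨p.1, h⟩, mem_attach _ _, Prod.ext rfl hg⟩

lemma image_fst_graphOn (s : Finset α) (g : s → β) : (graphOn s g).image Prod.fst = s := by
  simp [graphOn, image_image, Function.comp_def]

lemma card_graphOn (s : Finset α) (g : s → β) : #(graphOn s g) = #s := by
  rw [graphOn, card_image_of_injective _ fun a b h => Subtype.ext (congrArg Prod.fst h),
    card_attach]

lemma graphOn_injective (s : Finset α) : Function.Injective (graphOn (β := β) s) := by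
  intro g g' h
  funext a
  have ha : (a.1, g a) ∈ graphOn s g' := h ▸ mem_graphOn.mpr ⟨a.2, rfl⟩
  exact (mem_graphOn.mp ha).2.symm

end GraphOn

end Finset

namespace SimpleGraph

variable {α β γ : Type*} {G : SimpleGraph α} {H : SimpleGraph β}

section Cliques

theorem IndepSetFree.comap {r : ℕ} (f : α ↪ β) (h : H.IndepSetFree r) :
    (H.comap f).IndepSetFree r := by
  classical
  intro s hs
  refine h (s.map f) ⟨?_, (card_map f).trans hs.card_eq⟩
  rw [coe_map]
  rintro _ ⟨a, ha, rfl⟩ _ ⟨b, hb, rfl⟩ hne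
  exact hs.isIndepSet ha hb (fun h => hne (congrArg f h))

theorem IsIndepSet.card_lt_of_indepSetFree {r : ℕ} {s : Finset α} (hs : G.IsIndepSet s)
    (h : G.IndepSetFree r) : #s < r := by
  by_contra! hr
  obtain ⟨u, hus, hu⟩ := exists_subset_card_eq hr
  exact h u ⟨Set.Pairwise.mono (by simpa using hus) hs, hu⟩

variable [Fintype α] [DecidableEq α] [DecidableRel G.Adj]

theorem card_cliqueFinset_le_of_copy [Fintype β] [DecidableEq β] [DecidableRel H.Adj]
    (f : Copy G H) (r : ℕ) :
    #(G.cliqueFinset r) ≤ #(H.cliqueFinset r) := by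
  have hle : G.map f.toEmbedding ≤ H :=
    (map_le_iff_le_comap _ _ _).mpr fun _ _ h => f.toHom.map_adj h
  refine card_le_card_of_injOn (fun s => s.map f.toEmbedding) (fun s hs => ?_)
    (Finset.map_injective _).injOn
  simp only [coe_cliqueFinset, mem_cliqueSet_iff] at hs ⊢
  exact hs.map.mono hle

omit [DecidableRel G.Adj] in
lemma card_cliqueFinset_top (r : ℕ) :
    #((⊤ : SimpleGraph α).cliqueFinset r) = (Fintype.card α).choose r := by
  rw [← card_univ, ← card_powersetCard]
  congr 1
  ext s
  simp [isNClique_iff, IsClique.top]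

theorem exists_cliqueFree_comap_embedding {r : ℕ} (hr : r ≠ 0) :
    ∃ m, Fintype.card α ≤ m + #(G.cliqueFinset r) ∧
      ∃ e : Fin m ↪ α, (G.comap e).CliqueFree r := by
  have hne : ∀ s ∈ G.cliqueFinset r, s.Nonempty := fun s hs =>
    card_pos.mp ((mem_cliqueFinset_iff.mp hs).card_eq ▸ Nat.pos_of_ne_zero hr)
  choose pick hpick using hne
  set W := univ \ (G.cliqueFinset r).attach.image fun s => pick s.1 s.2
  set e : Fin #W ↪ α := W.equivFin.symm.toEmbedding.trans (Function.Embedding.subtype _)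
  refine ⟨#W, ?_, e, fun s hs => ?_⟩
  · calc Fintype.card α ≤ #W + #((G.cliqueFinset r).attach.image fun s => pick s.1 s.2) := by
          rw [← card_univ]; exact card_le_card_sdiff_add_card
      _ ≤ #W + #(G.cliqueFinset r) := by grw [card_image_le, card_attach]
  · have hmem : s.map e ∈ G.cliqueFinset r :=
      mem_cliqueFinset_iff.mpr (hs.map.mono ((map_le_iff_le_comap _ _ _).mpr le_rfl))
    obtain ⟨a, -, ha⟩ := mem_map.mp (hpick _ hmem)
    have haW : e a ∈ W := (W.equivFin.symm a).2
    exact (mem_sdiff.mp haW).2 (ha ▸ mem_image_of_mem _ (mem_attach _ ⟨_, hmem⟩))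

end Cliques

section LexProd

def lexProd (G : SimpleGraph α) (H : SimpleGraph β) : SimpleGraph (α × β) where
  Adj p q := G.Adj p.1 q.1 ∨ p.1 = q.1 ∧ H.Adj p.2 q.2
  symm.symm p q := by simp [eq_comm, adj_comm]

@[simp]
lemma lexProd_adj {p q : α × β} :
    (G.lexProd H).Adj p q ↔ G.Adj p.1 q.1 ∨ p.1 = q.1 ∧ H.Adj p.2 q.2 := Iff.rfl

instance [DecidableEq α] [DecidableRel G.Adj] [DecidableRel H.Adj] :
    DecidableRel (G.lexProd H).Adj :=
  fun _ _ => inferInstanceAs (Decidable (_ ∨ _))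

lemma lexProd_adj_of_fst_eq {p q : α × β} (h : p.1 = q.1) :
    (G.lexProd H).Adj p q ↔ H.Adj p.2 q.2 := by
  simp [h]

lemma comap_prodMap_id_lexProd (e : γ → β) :
    (G.lexProd H).comap (Prod.map id e) = G.lexProd (H.comap e) := by
  ext; simp

section Fiber

variable [DecidableEq β] {s : Finset (α × β)} {a : α} {r : ℕ}

lemma isNClique_image_snd (hs : ∀ p ∈ s, p.1 = a) (hc : (G.lexProd H).IsNClique r s) :
    H.IsNClique r (s.image Prod.snd) := by
  refine ⟨?_, (card_image_of_injOn (injOn_snd_of_fst_eq hs)).trans hc.card_eq⟩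
  simp only [coe_image]
  rintro _ ⟨p, hp, rfl⟩ _ ⟨q, hq, rfl⟩ hne
  have hpq : p ≠ q := fun h => hne (congrArg Prod.snd h)
  exact (lexProd_adj_of_fst_eq ((hs p hp).trans (hs q hq).symm)).mp (hc.isClique hp hq hpq)

lemma isNIndepSet_image_snd (hs : ∀ p ∈ s, p.1 = a) (hi : (G.lexProd H).IsNIndepSet r s) :
    H.IsNIndepSet r (s.image Prod.snd) := by
  refine ⟨?_, (card_image_of_injOn (injOn_snd_of_fst_eq hs)).trans hi.card_eq⟩
  simp only [coe_image]
  rintro _ ⟨p, hp, rfl⟩ _ ⟨q, hq, rfl⟩ hne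
  have hpq : p ≠ q := fun h => hne (congrArg Prod.snd h)
  exact mt (lexProd_adj_of_fst_eq ((hs p hp).trans (hs q hq).symm)).mpr
    (hi.isIndepSet hp hq hpq)

theorem CliqueFree.lexProd [Fintype α] [DecidableEq α] (h : H.CliqueFree (r + 1)) :
    (G.lexProd H).CliqueFree (Fintype.card α * r + 1) := by
  intro s hs
  obtain ⟨a, -, ha⟩ := exists_lt_card_fiber_of_mul_lt_card_of_maps_to (t := univ) (n := r)
    (f := Prod.fst) (fun p _ => mem_univ p.1) (by rw [hs.card_eq, card_univ]; omega)
  obtain ⟨u, hus, hu⟩ := exists_subset_card_eq (show r + 1 ≤ #{p ∈ s | p.1 = a} from ha)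
  have hfst : ∀ p ∈ u, p.1 = a := fun p hp => (mem_filter.mp (hus hp)).2
  have hsub : u ⊆ s := hus.trans (filter_subset _ _)
  exact h _ (isNClique_image_snd hfst ⟨hs.isClique.subset (by simpa using hsub), hu⟩)

theorem IndepSetFree.top_lexProd (h : H.IndepSetFree r) :
    ((⊤ : SimpleGraph α).lexProd H).IndepSetFree r := by
  intro s hs
  rcases s.eq_empty_or_nonempty with rfl | ⟨p, hp⟩
  · exact h ∅ ⟨by simp, by simpa using hs.card_eq⟩
  refine h _ (isNIndepSet_image_snd (a := p.1) (fun q hq => ?_) hs)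
  by_contra hne
  exact hs.isIndepSet hq hp (fun h => hne (congrArg Prod.fst h)) (Or.inl (by simpa using hne))

end Fiber

section GraphOn

variable [DecidableEq α] [DecidableEq β]

lemma IsNClique.graphOn_lexProd {r : ℕ} {s : Finset α} (hs : G.IsNClique r s) (g : s → β) :
    (G.lexProd H).IsNClique r (graphOn s g) := by
  refine ⟨fun p hp q hq hpq => Or.inl (hs.isClique ?_ ?_ ?_), (card_graphOn s g).trans hs.card_eq⟩
  · exact (mem_graphOn.mp hp).1
  · exact (mem_graphOn.mp hq).1
  · intro h
    obtain ⟨hp₁, hp₂⟩ := mem_graphOn.mp hp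
    obtain ⟨hq₁, hq₂⟩ := mem_graphOn.mp hq
    refine hpq (Prod.ext h ?_)
    rw [← hp₂, ← hq₂]
    congr

theorem card_cliqueFinset_mul_pow_le_card_cliqueFinset_lexProd [Fintype α] [Fintype β]
    [DecidableRel G.Adj] [DecidableRel H.Adj] (r : ℕ) :
    #(G.cliqueFinset r) * Fintype.card β ^ r ≤ #((G.lexProd H).cliqueFinset r) := by
  have hsub : (G.cliqueFinset r).biUnion (fun s => univ.image (graphOn (β := β) s)) ⊆
      (G.lexProd H).cliqueFinset r := by
    simp only [biUnion_subset, image_subset_iff, mem_cliqueFinset_iff]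
    exact fun s hs g _ => hs.graphOn_lexProd g
  refine le_of_eq_of_le ?_ (card_le_card hsub)
  rw [card_biUnion]
  · rw [← smul_eq_mul, ← sum_const]
    refine sum_congr rfl fun s hs => ?_
    rw [card_image_of_injective _ (graphOn_injective s), card_univ, Fintype.card_fun,
      Fintype.card_coe, (mem_cliqueFinset_iff.mp hs).card_eq]
  · intro s _ s' _ hne
    rw [Function.onFun, Finset.disjoint_left]
    rintro _ hg hg'
    obtain ⟨g, -, rfl⟩ := mem_image.mp hg
    obtain ⟨g', -, hg⟩ := mem_image.mp hg'
    exact hne (by rw [← image_fst_graphOn s g, ← hg, image_fst_graphOn])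

end GraphOn

end LexProd

section Labeling

variable {V K : Type*} [DecidableEq V]

/-- Labels of the diagonal pairs `s(v, v)` play no role; labelling all of `Sym2 V` makes the
set of labelings a plain function space. -/
def fromLabeling (f : Sym2 V → K) (c : K) : SimpleGraph V := fromEdgeSet {e | f e = c}

instance [DecidableEq K] (f : Sym2 V → K) (c : K) : DecidableRel (fromLabeling f c).Adj :=
  inferInstanceAs (DecidableRel (fromEdgeSet _).Adj)

variable {f : Sym2 V → K} {c : K} {s : Finset V}

lemma isClique_fromLabeling_iff :
    (fromLabeling f c).IsClique s ↔ ∀ e ∈ s.offDiag.image Sym2.mk.uncurry, f e = c := by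
  rw [forall_mem_image_offDiag_iff]
  simp only [IsClique, Set.Pairwise, fromLabeling, fromEdgeSet_adj, mem_coe, Set.mem_ofPred_eq]
  grind

lemma isIndepSet_fromLabeling_iff :
    (fromLabeling f c).IsIndepSet s ↔ ∀ e ∈ s.offDiag.image Sym2.mk.uncurry, f e ≠ c := by
  rw [forall_mem_image_offDiag_iff]
  simp only [IsIndepSet, Set.Pairwise, fromLabeling, fromEdgeSet_adj, mem_coe, Set.mem_ofPred_eq]
  grind

variable [Fintype V] [DecidableEq K]

lemma cliqueFinset_fromLabeling (f : Sym2 V → K) (c : K) (r : ℕ) :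
    (fromLabeling f c).cliqueFinset r =
      {s ∈ powersetCard r (univ : Finset V) |
        ∀ e ∈ s.offDiag.image Sym2.mk.uncurry, f e ∈ ({c} : Finset K)} := by
  ext s
  simp [isNClique_iff, isClique_fromLabeling_iff, and_comm]

variable [Fintype K]

lemma indepSetFinset_fromLabeling (f : Sym2 V → K) (c : K) (r : ℕ) :
    (fromLabeling f c).indepSetFinset r =
      {s ∈ powersetCard r (univ : Finset V) |
        ∀ e ∈ s.offDiag.image Sym2.mk.uncurry, f e ∈ (univ : Finset K).erase c} := by
  ext s
  simp [isNIndepSet_iff, isIndepSet_fromLabeling_iff, and_comm]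

theorem sum_card_filter_powersetCard_mul (r : ℕ) (A : Finset K) :
    (∑ f : Sym2 V → K,
      #{s ∈ powersetCard r univ | ∀ e ∈ s.offDiag.image Sym2.mk.uncurry, f e ∈ A}) *
        Fintype.card K ^ r.choose 2 =
      (Fintype.card V).choose r * #A ^ r.choose 2 * Fintype.card K ^ Fintype.card (Sym2 V) := by
  simp only [card_filter]
  rw [sum_comm, sum_mul, ← card_univ (α := V), ← card_powersetCard, mul_assoc, ← smul_eq_mul,
    ← sum_const]
  refine sum_congr rfl fun s hs => ?_
  have hE : #(s.offDiag.image Sym2.mk.uncurry) = r.choose 2 := by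
    rw [Sym2.card_image_offDiag, (mem_powersetCard.mp hs).2]
  rw [← card_filter, card_filter_forall_mem_eq, hE, mul_assoc, ← pow_add,
    Nat.sub_add_cancel (hE ▸ card_le_univ _)]

lemma sum_card_cliqueFinset_three_fromLabeling_mul (c : K) :
    (∑ f : Sym2 V → K, (#((fromLabeling f c).cliqueFinset 3) : ℝ)) * Fintype.card K ^ 3 =
      (Fintype.card V).choose 3 * Fintype.card K ^ Fintype.card (Sym2 V) := by
  have := sum_card_filter_powersetCard_mul (V := V) 3 {c}
  simp only [cliqueFinset_fromLabeling, card_singleton, one_pow, mul_one] at this ⊢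
  exact_mod_cast this

lemma sum_card_indepSetFinset_fromLabeling (c : K) (t : ℕ) :
    ∑ f : Sym2 V → K, (#((fromLabeling f c).indepSetFinset t) : ℝ) =
      (Fintype.card V).choose t * (1 - 1 / Fintype.card K : ℝ) ^ t.choose 2 *
        Fintype.card K ^ Fintype.card (Sym2 V) := by
  have hk : 0 < Fintype.card K := Fintype.card_pos_iff.mpr ⟨c⟩
  have h := sum_card_filter_powersetCard_mul (V := V) t ((univ : Finset K).erase c)
  rw [card_erase_of_mem (mem_univ c), card_univ] at h
  have h' : (∑ f : Sym2 V → K, (#((fromLabeling f c).indepSetFinset t) : ℝ)) *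
      Fintype.card K ^ t.choose 2 = (Fintype.card V).choose t *
        ((Fintype.card K : ℝ) - 1) ^ t.choose 2 * Fintype.card K ^ Fintype.card (Sym2 V) := by
    simp only [indepSetFinset_fromLabeling]
    rw [← Nat.cast_pred hk]
    exact_mod_cast h
  rw [one_sub_div (by positivity), div_pow]
  field_simp
  linear_combination h'

theorem exists_fromLabeling_card_triangles_lt_indepSetFree (c : K) {t : ℕ}
    (hn : 0 < Fintype.card V) (hk : 4 * (Fintype.card V : ℝ) ^ 2 ≤ (Fintype.card K : ℝ) ^ 3)
    (ht : ((Fintype.card V).choose t : ℝ) * (1 - 1 / Fintype.card K : ℝ) ^ t.choose 2 ≤ 1 / 4) :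
    ∃ f : Sym2 V → K, 2 * #((fromLabeling f c).cliqueFinset 3) < Fintype.card V ∧
      (fromLabeling f c).IndepSetFree t := by
  set n := Fintype.card V
  set k := Fintype.card K
  set N := Fintype.card (Sym2 V)
  set T : (Sym2 V → K) → ℝ := fun f => #((fromLabeling f c).cliqueFinset 3)
  set I : (Sym2 V → K) → ℝ := fun f => #((fromLabeling f c).indepSetFinset t)
  have hk0 : (0 : ℝ) < k := by exact_mod_cast Fintype.card_pos_iff.mpr ⟨c⟩
  have hn0 : (0 : ℝ) < n := by exact_mod_cast hn
  have hkN : (0 : ℝ) < k ^ N := pow_pos hk0 N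
  have hsumT : 2 * ∑ f, T f ≤ n * k ^ N / 2 := by
    have hchoose : (n.choose 3 : ℝ) ≤ n ^ 3 := by exact_mod_cast Nat.choose_le_pow n 3
    refine le_of_mul_le_mul_right ?_ (pow_pos hk0 3)
    calc (2 * ∑ f, T f) * k ^ 3 = 2 * n.choose 3 * k ^ N := by
          rw [mul_assoc, sum_card_cliqueFinset_three_fromLabeling_mul, mul_assoc]
      _ ≤ 2 * n ^ 3 * k ^ N := by gcongr
      _ ≤ n * k ^ N / 2 * k ^ 3 := by nlinarith [mul_pos hn0 hkN]
  have hsumI : n * ∑ f, I f ≤ n * k ^ N / 4 := by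
    calc n * ∑ f, I f = n * k ^ N * (n.choose t * (1 - 1 / k) ^ t.choose 2) := by
          rw [sum_card_indepSetFinset_fromLabeling]; ring
      _ ≤ n * k ^ N * (1 / 4) := by gcongr
      _ = n * k ^ N / 4 := by ring
  -- Some labeling has `2 T + n I < n`, hence no independent `t`-set and `2 T < n`.
  have key : ∑ f : Sym2 V → K, (2 * T f + n * I f) < ∑ _f : Sym2 V → K, (n : ℝ) := by
    rw [sum_add_distrib, ← mul_sum, ← mul_sum, sum_const, card_univ, Fintype.card_fun, nsmul_eq_mul]
    push_cast
    nlinarith [mul_pos hn0 hkN]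
  obtain ⟨f, -, hf⟩ := exists_lt_of_sum_lt key
  have hI : (fromLabeling f c).indepSetFinset t = ∅ := by
    by_contra h
    have : (1 : ℝ) ≤ I f := Nat.one_le_cast.mpr (card_pos.mpr (nonempty_iff_ne_empty.mpr h))
    have : (0 : ℝ) ≤ T f := Nat.cast_nonneg _
    nlinarith
  refine ⟨f, ?_, fun s hs => by simpa [hI] using mem_indepSetFinset_iff.mpr hs⟩
  have : I f = 0 := by simp [I, hI]
  rw [this, mul_zero, add_zero] at hf
  simp only [T] at hf
  exact_mod_cast hf

end Labeling

end SimpleGraph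

namespace RamseyTuran

open SimpleGraph

lemma cliqueCount_eq_card_cliqueFinset {n : ℕ} (G : SimpleGraph (Fin n))
    [DecidableRel G.Adj] (r : ℕ) : cliqueCount G r = #(G.cliqueFinset r) := by
  rw [cliqueCount, Nat.card_eq_fintype_card, Fintype.card_subtype]
  rfl

theorem exists_cliqueFree_three_indepSetFree {n k t : ℕ} (hn : 0 < n)
    (hk : 4 * (n : ℝ) ^ 2 ≤ (k : ℝ) ^ 3)
    (ht : (n.choose t : ℝ) * (1 - 1 / k : ℝ) ^ t.choose 2 ≤ 1 / 4) :
    ∃ m, n ≤ 2 * m ∧ ∃ H : SimpleGraph (Fin m), H.CliqueFree 3 ∧ H.IndepSetFree t := by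
  have hk0 : 0 < k := Nat.pos_of_ne_zero <| by
    rintro rfl
    have : (0 : ℝ) < 4 * n ^ 2 := by positivity
    norm_num at hk
    linarith
  obtain ⟨f, hf3, hft⟩ := exists_fromLabeling_card_triangles_lt_indepSetFree (V := Fin n)
    (K := Fin k) ⟨0, hk0⟩
    (by simpa using hn) (by simpa using hk) (by simpa using ht)
  obtain ⟨m, hm, e, he⟩ := exists_cliqueFree_comap_embedding (G := fromLabeling f ⟨0, hk0⟩)
    (r := 3) (by norm_num)
  rw [Fintype.card_fin] at hm hf3
  exact ⟨m, by omega, _, he, hft.comap e⟩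

theorem exists_cliqueFree_indepSetFree_le_cliqueCount {ℓ m n t : ℕ} (hn : n ≤ m * ℓ)
    (H : SimpleGraph (Fin m)) (h3 : H.CliqueFree 3) (ht : H.IndepSetFree t) :
    ∃ G : SimpleGraph (Fin n), G.CliqueFree (2 * ℓ + 1) ∧ G.IndepSetFree t ∧
      ℓ.choose 3 * (n / ℓ) ^ 3 ≤ cliqueCount G 3 := by
  classical
  set K := (⊤ : SimpleGraph (Fin ℓ)).lexProd H
  set q := n / ℓ
  have hq : q * ℓ ≤ n := Nat.div_mul_le_self n ℓ
  have hqm : q ≤ m := Nat.div_le_of_le_mul (by rwa [mul_comm])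
  -- `φ i = (i % ℓ, i / ℓ)` and `ψ (i, a) = i + ℓ a`.
  let φ : Fin n ↪ Fin ℓ × Fin m :=
    (Fin.castLEEmb hn).trans (finProdFinEquiv.symm.trans (Equiv.prodComm _ _)).toEmbedding
  let ψ : Fin ℓ × Fin q ↪ Fin n :=
    ((Equiv.prodComm _ _).trans finProdFinEquiv).toEmbedding.trans (Fin.castLEEmb hq)
  have hφψ : φ ∘ ψ = Prod.map id (Fin.castLE hqm) := by
    funext ⟨i, a⟩
    simp only [φ, ψ, Function.comp_apply, Function.Embedding.trans_apply, Equiv.coe_toEmbedding,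
      Equiv.trans_apply, Equiv.prodComm_apply, Prod.swap_prod_mk, Prod.map_apply, id_eq]
    rw [Prod.swap_eq_iff_eq_swap, Prod.swap_prod_mk, Equiv.symm_apply_eq]
    ext; simp
  have hcomap :
      (K.comap φ).comap ψ = (⊤ : SimpleGraph (Fin ℓ)).lexProd (H.comap (Fin.castLE hqm)) := by
    rw [SimpleGraph.comap_comap, hφψ, comap_prodMap_id_lexProd]
  refine ⟨K.comap φ, ?_, ht.top_lexProd.comap φ, ?_⟩
  · have hK : K.CliqueFree (Fintype.card (Fin ℓ) * 2 + 1) := h3.lexProd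
    rw [Fintype.card_fin, mul_comm] at hK
    exact hK.comap (Embedding.comap φ K).isContained
  · rw [cliqueCount_eq_card_cliqueFinset]
    calc ℓ.choose 3 * q ^ 3
        = #((⊤ : SimpleGraph (Fin ℓ)).cliqueFinset 3) * Fintype.card (Fin q) ^ 3 := by
          rw [card_cliqueFinset_top, Fintype.card_fin, Fintype.card_fin]
      _ ≤ #(((⊤ : SimpleGraph (Fin ℓ)).lexProd (H.comap (Fin.castLE hqm))).cliqueFinset 3) :=
          card_cliqueFinset_mul_pow_le_card_cliqueFinset_lexProd 3
      _ = #(((K.comap φ).comap ψ).cliqueFinset 3) := by simp_rw [hcomap]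
      _ ≤ #((K.comap φ).cliqueFinset 3) :=
          card_cliqueFinset_le_of_copy (Embedding.comap ψ (K.comap φ)).toCopy 3

open Filter Topology

theorem choose_mul_one_sub_inv_pow_le {n t : ℕ} {k : ℝ} (hk : 1 ≤ k) (hn : 0 < n)
    (ht : 2 * k * (Real.log n + 2) + 1 ≤ t) :
    (n.choose t : ℝ) * (1 - 1 / k) ^ t.choose 2 ≤ 1 / 4 := by
  have hk0 : 0 < k := by linarith
  have hlog : 0 ≤ Real.log n := Real.log_nonneg (by exact_mod_cast hn)
  have ht1 : (1 : ℝ) ≤ t := by nlinarith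
  have hnonneg : 0 ≤ 1 - 1 / k := sub_nonneg.mpr ((div_le_one hk0).mpr hk)
  have hbase : 1 - 1 / k ≤ Real.exp (-(1 / k)) := by linarith [Real.add_one_le_exp (-(1 / k))]
  have hchoose : (n.choose t : ℝ) ≤ Real.exp (t * Real.log n) := by
    rw [Real.exp_nat_mul, Real.exp_log (by exact_mod_cast hn)]
    exact_mod_cast Nat.choose_le_pow n t
  have hexp : t * Real.log n + (t.choose 2 : ℝ) * (-(1 / k)) ≤ -2 := by
    rw [Nat.cast_choose_two]
    have : (t : ℝ) * (Real.log n + 2) ≤ t * ((t - 1) / (2 * k)) := by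
      gcongr
      rw [le_div_iff₀ (by positivity)]
      linarith
    have : (t : ℝ) * ((t - 1) / (2 * k)) = t * (t - 1) / 2 * (1 / k) := by field_simp
    nlinarith
  have he2 : Real.exp (-2) ≤ 1 / 4 := by
    rw [Real.exp_neg, ← one_div, one_div_le_one_div (Real.exp_pos 2) (by norm_num),
      show (2 : ℝ) = 1 + 1 by norm_num, Real.exp_add]
    nlinarith [Real.exp_one_gt_d9]
  calc (n.choose t : ℝ) * (1 - 1 / k) ^ t.choose 2
      ≤ Real.exp (t * Real.log n) * Real.exp (-(1 / k)) ^ t.choose 2 :=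
        mul_le_mul hchoose (pow_le_pow_left₀ hnonneg hbase _) (pow_nonneg hnonneg _)
          (Real.exp_pos _).le
    _ = Real.exp (t * Real.log n + (t.choose 2 : ℝ) * (-(1 / k))) := by
        rw [Real.exp_add, Real.exp_nat_mul (-(1 / k))]
    _ ≤ 1 / 4 := (Real.exp_le_exp.mpr hexp).trans he2

noncomputable def numColors (n : ℕ) : ℕ := ⌈2 * (n : ℝ) ^ ((2 : ℝ) / 3)⌉₊

noncomputable def indepThreshold (n : ℕ) : ℕ :=
  ⌈2 * numColors n * (Real.log n + 2)⌉₊ + 1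

lemma rpow_two_thirds_cube (x : ℝ) (hx : 0 ≤ x) : (x ^ ((2 : ℝ) / 3)) ^ 3 = x ^ 2 := by
  rw [← Real.rpow_mul_natCast hx]
  norm_num

lemma four_mul_sq_le_numColors_cube (n : ℕ) : 4 * (n : ℝ) ^ 2 ≤ (numColors n : ℝ) ^ 3 := by
  have h : 2 * (n : ℝ) ^ ((2 : ℝ) / 3) ≤ numColors n := Nat.le_ceil _
  calc 4 * (n : ℝ) ^ 2 ≤ (2 * (n : ℝ) ^ ((2 : ℝ) / 3)) ^ 3 := by
        rw [mul_pow, rpow_two_thirds_cube _ n.cast_nonneg]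
        nlinarith [sq_nonneg (n : ℝ)]
    _ ≤ (numColors n : ℝ) ^ 3 := by gcongr

lemma one_le_numColors {n : ℕ} (hn : 0 < n) : (1 : ℝ) ≤ numColors n := by
  have : 0 < 2 * (n : ℝ) ^ ((2 : ℝ) / 3) := by positivity
  exact_mod_cast Nat.one_le_iff_ne_zero.mpr (Nat.ceil_pos.mpr this).ne'

lemma numColors_le {n : ℕ} (hn : 0 < n) : (numColors n : ℝ) ≤ 3 * (n : ℝ) ^ ((2 : ℝ) / 3) := by
  have h1 : (1 : ℝ) ≤ (n : ℝ) ^ ((2 : ℝ) / 3) :=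
    Real.one_le_rpow (by exact_mod_cast hn) (by norm_num)
  have h2 := Nat.ceil_lt_add_one (by positivity : (0 : ℝ) ≤ 2 * (n : ℝ) ^ ((2 : ℝ) / 3))
  rw [numColors]
  linarith

lemma le_indepThreshold (n : ℕ) :
    2 * (numColors n : ℝ) * (Real.log n + 2) + 1 ≤ indepThreshold n := by
  rw [indepThreshold, Nat.cast_add_one]
  gcongr
  exact Nat.le_ceil _

lemma indepThreshold_le {n : ℕ} (hn : 8 ≤ n) :
    (indepThreshold n : ℝ) ≤ 14 * (n : ℝ) ^ ((2 : ℝ) / 3) * Real.log n := by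
  have hn0 : 0 < n := by omega
  have hlog : 2 ≤ Real.log n := by
    rw [Real.le_log_iff_exp_le (by positivity)]
    have h8 : (8 : ℝ) ≤ n := by exact_mod_cast hn
    rw [show (2 : ℝ) = (2 : ℕ) * 1 by norm_num, Real.exp_nat_mul]
    nlinarith [Real.exp_one_lt_d9, Real.exp_pos 1]
  have hrpow : (1 : ℝ) ≤ (n : ℝ) ^ ((2 : ℝ) / 3) :=
    Real.one_le_rpow (by exact_mod_cast hn0) (by norm_num)
  have hk := numColors_le hn0
  have ht : (indepThreshold n : ℝ) ≤ 2 * numColors n * (Real.log n + 2) + 2 := by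
    rw [indepThreshold, Nat.cast_add_one]
    have := Nat.ceil_lt_add_one (by positivity : (0 : ℝ) ≤ 2 * numColors n * (Real.log n + 2))
    linarith
  calc (indepThreshold n : ℝ) ≤ 2 * numColors n * (Real.log n + 2) + 2 := ht
    _ ≤ 2 * (3 * (n : ℝ) ^ ((2 : ℝ) / 3)) * (2 * Real.log n) + 2 := by gcongr; linarith
    _ ≤ 14 * (n : ℝ) ^ ((2 : ℝ) / 3) * Real.log n := by nlinarith

lemma eventually_indepThreshold_le :
    ∀ᶠ n : ℕ in atTop, (indepThreshold n : ℝ) ≤ (n : ℝ) ^ ((3 : ℝ) / 4) := by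
  have hlog : ∀ᶠ x : ℝ in atTop, Real.log x ≤ (1 / 14) * x ^ ((1 : ℝ) / 12) := by
    filter_upwards [(isLittleO_log_rpow_atTop (by norm_num : (0 : ℝ) < 1 / 12)).bound
      (by norm_num : (0 : ℝ) < 1 / 14), eventually_ge_atTop 1] with x hx hx1
    rwa [Real.norm_of_nonneg (Real.log_nonneg hx1),
      Real.norm_of_nonneg (by positivity)] at hx
  filter_upwards [tendsto_natCast_atTop_atTop.eventually hlog, eventually_ge_atTop 8] with n hn hn8
  have hn0 : (0 : ℝ) < n := by exact_mod_cast (by omega : 0 < n)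
  calc (indepThreshold n : ℝ) ≤ 14 * (n : ℝ) ^ ((2 : ℝ) / 3) * Real.log n := indepThreshold_le hn8
    _ ≤ 14 * (n : ℝ) ^ ((2 : ℝ) / 3) * ((1 / 14) * (n : ℝ) ^ ((1 : ℝ) / 12)) := by gcongr
    _ = (n : ℝ) ^ ((3 : ℝ) / 4) := by
        rw [show ∀ a b : ℝ, 14 * a * (1 / 14 * b) = a * b by intros; ring, ← Real.rpow_add hn0]
        norm_num

lemma eventually_rpow_le_mul_two_rpow {γ : ℝ} (hγ : γ < 1) (C : ℝ) :
    ∀ᶠ n : ℕ in atTop,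
      (n : ℝ) ^ ((3 : ℝ) / 4) ≤ n * (2 : ℝ) ^ (-(C * Real.logb 2 n ^ γ)) := by
  have hlog : Tendsto (fun n : ℕ => Real.logb 2 n) atTop atTop :=
    (Real.tendsto_logb_atTop (by norm_num)).comp tendsto_natCast_atTop_atTop
  have hpow : Tendsto (fun n : ℕ => Real.logb 2 n ^ (1 - γ)) atTop atTop :=
    (tendsto_rpow_atTop (by linarith)).comp hlog
  filter_upwards [hpow.eventually_ge_atTop (4 * C), hlog.eventually_ge_atTop 1,
    eventually_gt_atTop 0] with n hC hy hn
  set y := Real.logb 2 n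
  have hn0 : (0 : ℝ) < n := by exact_mod_cast hn
  have hexp : C * y ^ γ ≤ y / 4 := by
    have hy0 : 0 < y := by linarith
    have : y ^ (1 - γ) * y ^ γ = y := by rw [← Real.rpow_add hy0]; norm_num
    nlinarith [Real.rpow_nonneg hy0.le γ]
  calc (n : ℝ) ^ ((3 : ℝ) / 4) = n * (2 : ℝ) ^ (-(y / 4)) := by
        rw [show -(y / 4) = y * (-(1 / 4)) by ring, Real.rpow_mul (by norm_num),
          Real.rpow_logb (by norm_num) (by norm_num) hn0, ← Real.rpow_one_add' hn0.le (by norm_num)]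
        norm_num
    _ ≤ n * (2 : ℝ) ^ (-(C * y ^ γ)) := by gcongr; linarith

lemma eventually_sub_mul_cube_le (a : ℝ) {ℓ : ℕ} (hℓ : 0 < ℓ) {ε : ℝ} (hε : 0 < ε) :
    ∀ᶠ n : ℕ in atTop, (a / (ℓ : ℝ) ^ 3 - ε) * (n : ℝ) ^ 3 ≤ a * ((n / ℓ : ℕ) : ℝ) ^ 3 := by
  have hℓ0 : (0 : ℝ) < ℓ := by exact_mod_cast hℓ
  have hdiv : Tendsto (fun n : ℕ => ((n / ℓ : ℕ) : ℝ) / n) atTop (𝓝 (1 / ℓ)) := by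
    have h := ((tendsto_nat_floor_div_atTop (R := ℝ)).comp
      (tendsto_natCast_atTop_atTop.atTop_div_const hℓ0)).mul_const (1 / (ℓ : ℝ))
    rw [one_mul] at h
    refine h.congr' ((eventually_gt_atTop 0).mono fun n hn => ?_)
    have hn0 : (n : ℝ) ≠ 0 := by exact_mod_cast hn.ne'
    simp only [Function.comp_apply, Nat.floor_div_eq_div]
    field_simp
  have hlim : Tendsto (fun n : ℕ => a * (((n / ℓ : ℕ) : ℝ) / n) ^ 3) atTop
      (𝓝 (a / (ℓ : ℝ) ^ 3)) := by
    simpa [div_eq_mul_inv] using (hdiv.pow 3).const_mul a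
  filter_upwards [hlim.eventually (lt_mem_nhds (by linarith : a / (ℓ : ℝ) ^ 3 - ε < _)),
    eventually_gt_atTop 0] with n hn hn0
  have hn0' : (0 : ℝ) < n := by exact_mod_cast hn0
  calc (a / (ℓ : ℝ) ^ 3 - ε) * (n : ℝ) ^ 3 ≤ a * (((n / ℓ : ℕ) : ℝ) / n) ^ 3 * (n : ℝ) ^ 3 := by
        gcongr
    _ = a * ((n / ℓ : ℕ) : ℝ) ^ 3 := by field_simp

end RamseyTuran

open RamseyTuran SimpleGraph Filter in
theorem statement_16_general (ℓ : ℕ) (hℓ : 3 ≤ ℓ) (ε : ℝ) (hε : 0 < ε) (C : ℝ) :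
    ∃ n0 : ℕ, ∀ n : ℕ, n0 ≤ n → ∃ G : SimpleGraph (Fin n),
      G.CliqueFree (2 * ℓ + 1) ∧
      indepLE G ((n : ℝ) * (2 : ℝ) ^ (-(C * Real.logb 2 n ^ ((ℓ : ℝ) / ((ℓ : ℝ) + 1))))) ∧
      ((ℓ.choose 3 : ℝ) / (ℓ : ℝ) ^ 3 - ε) * (n : ℝ) ^ 3 ≤ (cliqueCount G 3 : ℝ) := by
  have hγ : (ℓ : ℝ) / ((ℓ : ℝ) + 1) < 1 := by rw [div_lt_one (by positivity)]; linarith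
  obtain ⟨n0, hn0⟩ := eventually_atTop.mp <|
    eventually_indepThreshold_le.and <| (eventually_rpow_le_mul_two_rpow hγ C).and <|
      (eventually_sub_mul_cube_le (ℓ.choose 3) (ℓ := ℓ) (by omega) hε).and (eventually_gt_atTop 0)
  refine ⟨n0, fun n hn => ?_⟩
  obtain ⟨ht, hα, htri, hn⟩ := hn0 n hn
  obtain ⟨m, hm, H, hH3, hHt⟩ := exists_cliqueFree_three_indepSetFree hn
    (four_mul_sq_le_numColors_cube n)
    (choose_mul_one_sub_inv_pow_le (one_le_numColors hn) hn (le_indepThreshold n))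
  obtain ⟨G, hG, hGt, hGtri⟩ :=
    exists_cliqueFree_indepSetFree_le_cliqueCount (ℓ := ℓ) (n := n) (by nlinarith) H hH3 hHt
  refine ⟨G, hG, fun S hS => ?_, htri.trans (by exact_mod_cast hGtri)⟩
  calc (#S : ℝ) ≤ indepThreshold n := by
        exact_mod_cast (IsIndepSet.card_lt_of_indepSetFree hS hGt).le
    _ ≤ _ := ht
    _ ≤ _ := hα

theorem statement_16 (ℓ : ℕ) (hℓ : 3 ≤ ℓ) (ε : ℝ) (hε : 0 < ε) (C : ℝ) (hC : 0 < C) :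
    ∃ n0 : ℕ, ∀ n : ℕ, n0 ≤ n → ∃ G : SimpleGraph (Fin n),
      G.CliqueFree (2 * ℓ + 1) ∧
      indepLE G ((n : ℝ) * (2 : ℝ) ^ (-(C * Real.logb 2 n ^ ((ℓ : ℝ) / ((ℓ : ℝ) + 1))))) ∧
      ((ℓ.choose 3 : ℝ) / (ℓ : ℝ) ^ 3 - ε) * (n : ℝ) ^ 3 ≤ (cliqueCount G 3 : ℝ) :=
  statement_16_general ℓ hℓ ε hε C
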